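/- arXiv:2605.05670 — 3 statements merged into one kernel-verified Lean document; each statement's English description precedes it below -/
import Mathlib

section
/- Let λ : M → ℝ be continuous with λ ≥ 0 and let λ⁻¹(0) be nonempty. Define c₀ := inf_{u∈C^∞(M,ℝ)} sup_{x∈M} [λ(x)u(x) + h(x,d_xu(x))] and c_λ(h) := inf_{u∈C^∞(M,ℝ)} sup_{x∈λ⁻¹(0)} h(x,d_xu(x)). Then c₀ = c_λ(h). -/
open Set

/-- for a nonnegative discount factor vanishing somewhere, the
critical value `c₀` equals
`c_λ(h) = inf_u sup_{x ∈ λ⁻¹(0)} h(x,d_xu(x))`. -/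
theorem stmt11
    {E : Type*} [NormedAddCommGroup E] [NormedSpace ℝ E] [FiniteDimensional ℝ E]
    (M : Set E) (hMcpt : IsCompact M) (hMne : M.Nonempty)
    (h : E → (E →L[ℝ] ℝ) → ℝ)
    (hcont : Continuous fun q : E × (E →L[ℝ] ℝ) => h q.1 q.2)
    (hsmooth : ContDiff ℝ (⊤ : ℕ∞) fun q : E × (E →L[ℝ] ℝ) => h q.1 q.2)
    (hconv : ∀ x, StrictConvexOn ℝ Set.univ (h x))
    (hsuper : ∀ K : ℝ, 0 ≤ K → ∃ A > 0, ∀ x ∈ M, ∀ p, K * ‖p‖ - A ≤ h x p)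
    (lam : E → ℝ) (hlamc : Continuous lam)
    (hlamnn : ∀ x ∈ M, 0 ≤ lam x)
    (hZ : ∃ x ∈ M, lam x = 0)
    (hlampos : ∃ x ∈ M, 0 < lam x) :
    sInf {r : ℝ | ∃ u : E → ℝ, ContDiff ℝ (⊤ : ℕ∞) u ∧
        r = sSup ((fun x => lam x * u x + h x (fderiv ℝ u x)) '' M)}
      = sInf {r : ℝ | ∃ u : E → ℝ, ContDiff ℝ (⊤ : ℕ∞) u ∧
        r = sSup ((fun x => h x (fderiv ℝ u x)) '' {x ∈ M | lam x = 0})} := by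
  set Z : Set E := {x ∈ M | lam x = 0} with hZdef
  have hZsub : Z ⊆ M := fun x hx => hx.1
  have hZne : Z.Nonempty := by obtain ⟨x, hx, h0⟩ := hZ; exact ⟨x, hx, h0⟩
  have hZcl : IsClosed Z := by
    have : Z = M ∩ lam ⁻¹' {0} := by ext x; simp [hZdef]
    rw [this]
    exact hMcpt.isClosed.inter (isClosed_singleton.preimage hlamc)
  have hZcpt : IsCompact Z := hMcpt.of_isClosed_subset hZcl hZsub
  obtain ⟨A, hApos, hAbd⟩ := hsuper 0 le_rfl
  have hAbd' : ∀ x ∈ M, ∀ p, -A ≤ h x p := by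
    intro x hx p
    have := hAbd x hx p
    simpa using this
  -- continuity of x ↦ h x (d u x)
  have contF : ∀ u : E → ℝ, ContDiff ℝ (⊤ : ℕ∞) u →
      Continuous fun x => h x (fderiv ℝ u x) := by
    intro u hu
    have h1 : Continuous fun x => fderiv ℝ u x :=
      hu.continuous_fderiv (by simp)
    exact hcont.comp (continuous_id.prodMk h1)
  have contG : ∀ u : E → ℝ, ContDiff ℝ (⊤ : ℕ∞) u →
      Continuous fun x => lam x * u x + h x (fderiv ℝ u x) := by
    intro u hu
    exact (hlamc.mul hu.continuous).add (contF u hu)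
  set S1 : Set ℝ := {r : ℝ | ∃ u : E → ℝ, ContDiff ℝ (⊤ : ℕ∞) u ∧
      r = sSup ((fun x => lam x * u x + h x (fderiv ℝ u x)) '' M)} with hS1def
  set S2 : Set ℝ := {r : ℝ | ∃ u : E → ℝ, ContDiff ℝ (⊤ : ℕ∞) u ∧
      r = sSup ((fun x => h x (fderiv ℝ u x)) '' Z)} with hS2def
  have hS1ne : S1.Nonempty := ⟨_, (0 : E → ℝ), contDiff_const, rfl⟩
  have hS2ne : S2.Nonempty := ⟨_, (0 : E → ℝ), contDiff_const, rfl⟩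
  have hS1bdd : BddBelow S1 := by
    refine ⟨-A, ?_⟩
    rintro r ⟨u, hu, rfl⟩
    obtain ⟨x₀, hx₀⟩ := hZne
    have hbA : BddAbove ((fun x => lam x * u x + h x (fderiv ℝ u x)) '' M) :=
      hMcpt.bddAbove_image (contG u hu).continuousOn
    have h1 : lam x₀ * u x₀ + h x₀ (fderiv ℝ u x₀) ≤
        sSup ((fun x => lam x * u x + h x (fderiv ℝ u x)) '' M) :=
      le_csSup hbA (mem_image_of_mem _ (hZsub hx₀))
    have h2 : -A ≤ lam x₀ * u x₀ + h x₀ (fderiv ℝ u x₀) := by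
      rw [hx₀.2, zero_mul, zero_add]
      exact hAbd' x₀ (hZsub hx₀) _
    linarith
  have hS2bdd : BddBelow S2 := by
    refine ⟨-A, ?_⟩
    rintro r ⟨u, hu, rfl⟩
    obtain ⟨x₀, hx₀⟩ := hZne
    have hbA : BddAbove ((fun x => h x (fderiv ℝ u x)) '' Z) :=
      hZcpt.bddAbove_image ((contF u hu).continuousOn)
    have h1 : h x₀ (fderiv ℝ u x₀) ≤ sSup ((fun x => h x (fderiv ℝ u x)) '' Z) :=
      le_csSup hbA (mem_image_of_mem _ hx₀)
    have h2 : -A ≤ h x₀ (fderiv ℝ u x₀) := hAbd' x₀ (hZsub hx₀) _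
    linarith
  apply le_antisymm
  · -- hard direction: sInf S1 ≤ sInf S2
    apply le_of_forall_pos_le_add
    intro ε hε
    obtain ⟨c, hcS2, hclt⟩ := exists_lt_of_csInf_lt hS2ne
      (lt_add_of_pos_right (sInf S2) (half_pos hε))
    obtain ⟨g, hg, hc⟩ := hcS2
    obtain ⟨F, hFdef⟩ : ∃ F : E → ℝ, F = fun x => h x (fderiv ℝ g x) := ⟨_, rfl⟩
    have hFx : ∀ x, F x = h x (fderiv ℝ g x) := fun x => by rw [hFdef]
    have hFc : Continuous F := by rw [hFdef]; exact contF g hg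
    have hc' : c = sSup (F '' Z) := by rw [hFdef]; exact hc
    have hFZ : ∀ x ∈ Z, F x ≤ c := by
      intro x hx
      rw [hc']
      exact le_csSup (hZcpt.bddAbove_image hFc.continuousOn) (mem_image_of_mem _ hx)
    set U : Set E := F ⁻¹' Iio (c + ε / 2) with hUdef
    have hUmem : ∀ x, x ∈ U ↔ F x < c + ε / 2 := fun x => Iff.rfl
    have hUopen : IsOpen U := isOpen_Iio.preimage hFc
    have hZU : Z ⊆ U := by
      intro x hx
      have : F x ≤ c := hFZ x hx
      rw [hUmem]
      linarith
    obtain ⟨Msup, hFM⟩ : ∃ Msup : ℝ, ∀ x ∈ M, F x ≤ Msup :=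
      ⟨_, fun x hx => le_csSup (hMcpt.bddAbove_image hFc.continuousOn)
        (mem_image_of_mem _ hx)⟩
    obtain ⟨S, hgS⟩ : ∃ S : ℝ, ∀ x ∈ M, g x ≤ S :=
      ⟨_, fun x hx => le_csSup (hMcpt.bddAbove_image hg.continuous.continuousOn)
        (mem_image_of_mem _ hx)⟩
    obtain ⟨T, hT0, hTK⟩ : ∃ T : ℝ, 0 ≤ T ∧
        ∀ x ∈ M \ U, F x - lam x * T ≤ c + ε / 2 := by
      by_cases hK : (M \ U).Nonempty
      · obtain ⟨z, hzK, hz⟩ := (hMcpt.diff hUopen).exists_isMinOn hK hlamc.continuousOn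
        have hδ : 0 < lam z := by
          rcases (hlamnn z hzK.1).lt_or_eq with hlt | heq
          · exact hlt
          · exact absurd (hZU ⟨hzK.1, heq.symm⟩) hzK.2
        refine ⟨max 0 ((Msup - (c + ε / 2)) / lam z), le_max_left _ _, ?_⟩
        intro x hx
        have h1 : lam z ≤ lam x := isMinOn_iff.mp hz x hx
        have h2 : Msup - (c + ε / 2) ≤ lam z * max 0 ((Msup - (c + ε / 2)) / lam z) := by
          have := mul_le_mul_of_nonneg_left
            (le_max_right 0 ((Msup - (c + ε / 2)) / lam z)) hδ.le
          rwa [mul_div_cancel₀ _ hδ.ne'] at this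
        have h3 : lam z * max 0 ((Msup - (c + ε / 2)) / lam z)
            ≤ lam x * max 0 ((Msup - (c + ε / 2)) / lam z) :=
          mul_le_mul_of_nonneg_right h1 (le_max_left _ _)
        have h4 : F x ≤ Msup := hFM x hx.1
        linarith
      · exact ⟨0, le_rfl, fun x hx => absurd ⟨x, hx⟩ hK⟩
    obtain ⟨v, hvdef⟩ : ∃ v : E → ℝ, v = fun x => g x - (S + T) := ⟨_, rfl⟩
    have hvx' : ∀ x, v x = g x - (S + T) := fun x => by rw [hvdef]
    have hv : ContDiff ℝ (⊤ : ℕ∞) v := by rw [hvdef]; exact hg.sub contDiff_const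
    have hdv : ∀ x, fderiv ℝ v x = fderiv ℝ g x := by
      intro x
      rw [hvdef]
      exact fderiv_sub_const (S + T)
    have hbound : ∀ x ∈ M, lam x * v x + h x (fderiv ℝ v x) ≤ c + ε / 2 := by
      intro x hxM
      rw [hdv x, ← hFx x]
      have hvx : v x ≤ -T := by
        have := hgS x hxM
        rw [hvx' x]
        linarith
      have hl : 0 ≤ lam x := hlamnn x hxM
      have h4 : lam x * v x ≤ lam x * (-T) := mul_le_mul_of_nonneg_left hvx hl
      by_cases hxU : x ∈ U
      · have h5 : F x < c + ε / 2 := (hUmem x).mp hxU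
        have h6 : lam x * (-T) ≤ 0 := mul_nonpos_of_nonneg_of_nonpos hl (neg_nonpos.mpr hT0)
        linarith
      · have h5 := hTK x ⟨hxM, hxU⟩
        have h6 : lam x * (-T) = -(lam x * T) := mul_neg _ _
        linarith
    have hmem : sSup ((fun x => lam x * v x + h x (fderiv ℝ v x)) '' M) ∈ S1 :=
      ⟨v, hv, rfl⟩
    have h7 : sInf S1 ≤ sSup ((fun x => lam x * v x + h x (fderiv ℝ v x)) '' M) :=
      csInf_le hS1bdd hmem
    have h8 : sSup ((fun x => lam x * v x + h x (fderiv ℝ v x)) '' M) ≤ c + ε / 2 := by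
      apply csSup_le (hMne.image _)
      rintro r ⟨x, hx, rfl⟩
      exact hbound x hx
    linarith
  · -- easy direction: sInf S2 ≤ sInf S1
    apply le_csInf hS1ne
    rintro r ⟨u, hu, rfl⟩
    have hmem : sSup ((fun x => h x (fderiv ℝ u x)) '' Z) ∈ S2 := ⟨u, hu, rfl⟩
    have h1 : sInf S2 ≤ sSup ((fun x => h x (fderiv ℝ u x)) '' Z) := csInf_le hS2bdd hmem
    have h2 : sSup ((fun x => h x (fderiv ℝ u x)) '' Z) ≤
        sSup ((fun x => lam x * u x + h x (fderiv ℝ u x)) '' M) := by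
      apply csSup_le_csSup (hMcpt.bddAbove_image (contG u hu).continuousOn)
        (hZne.image _)
      rintro r ⟨x, hx, rfl⟩
      refine ⟨x, hx.1, ?_⟩
      show lam x * u x + h x (fderiv ℝ u x) = h x (fderiv ℝ u x)
      rw [hx.2, zero_mul, zero_add]
    linarith
end

section
/- Let λ : M → ℝ be continuous with λ ≥ 0. Define c(h+aλ) := inf_{u∈C^∞(M,ℝ)} sup_{x∈M} [aλ(x) + h(x,d_xu(x))] for a ∈ ℝ, and c_λ(h) := inf_{u∈C^∞(M,ℝ)} sup_{x∈λ⁻¹(0)} h(x,d_xu(x)) (with λ⁻¹(0) ≠ ∅). Then: (i) a ↦ c(h+aλ) is monotone nondecreasing; (ii) c_λ(h) ≤ c(h+aλ) for all a ∈ ℝ; (iii) lim_{a→−∞} c(h+aλ) = c_λ(h). -/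
open Set Filter

/-- monotonicity and limit of the Mañé critical values
`c(h+aλ)` as `a → −∞`, for a nonnegative discount factor `λ` vanishing
somewhere. -/
theorem stmt12
    {E : Type*} [NormedAddCommGroup E] [NormedSpace ℝ E] [FiniteDimensional ℝ E]
    (M : Set E) (hMcpt : IsCompact M) (hMne : M.Nonempty)
    (h : E → (E →L[ℝ] ℝ) → ℝ)
    (hcont : Continuous fun q : E × (E →L[ℝ] ℝ) => h q.1 q.2)
    (hconv : ∀ x, StrictConvexOn ℝ Set.univ (h x))
    (hsuper : ∀ K : ℝ, 0 ≤ K → ∃ A > 0, ∀ x ∈ M, ∀ p, K * ‖p‖ - A ≤ h x p)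
    (lam : E → ℝ) (hlamc : Continuous lam)
    (hlamnn : ∀ x ∈ M, 0 ≤ lam x)
    (hZ : ∃ x ∈ M, lam x = 0)
    (cM : ℝ → ℝ)
    (hcM : ∀ a : ℝ, cM a = sInf {r : ℝ | ∃ u : E → ℝ, ContDiff ℝ (⊤ : ℕ∞) u ∧
        r = sSup ((fun x => a * lam x + h x (fderiv ℝ u x)) '' M)})
    (clam : ℝ)
    (hclam : clam = sInf {r : ℝ | ∃ u : E → ℝ, ContDiff ℝ (⊤ : ℕ∞) u ∧
        r = sSup ((fun x => h x (fderiv ℝ u x)) '' {x ∈ M | lam x = 0})}) :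
    Monotone cM ∧ (∀ a : ℝ, clam ≤ cM a) ∧ Tendsto cM atBot (nhds clam) := by
  -- notation
  set Z : Set E := {x ∈ M | lam x = 0} with hZdef
  have hZsub : Z ⊆ M := fun x hx => hx.1
  obtain ⟨x0, hx0M, hx0lam⟩ := hZ
  have hx0Z : x0 ∈ Z := ⟨hx0M, hx0lam⟩
  have hZcpt : IsCompact Z := by
    have : Z = M ∩ lam ⁻¹' {0} := by ext x; simp [hZdef, Set.mem_sep_iff]
    rw [this]
    exact hMcpt.inter_right (isClosed_singleton.preimage hlamc)
  -- continuity of x ↦ h x (d u x)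
  have hgc : ∀ u : E → ℝ, ContDiff ℝ (⊤ : ℕ∞) u →
      Continuous fun x => h x (fderiv ℝ u x) := fun u hu =>
    hcont.comp (continuous_id.prodMk (hu.continuous_fderiv (by simp)))
  have hFc : ∀ (a : ℝ) (u : E → ℝ), ContDiff ℝ (⊤ : ℕ∞) u →
      Continuous fun x => a * lam x + h x (fderiv ℝ u x) := fun a u hu =>
    (continuous_const.mul hlamc).add (hgc u hu)
  -- lower bound on h
  obtain ⟨A, hApos, hA⟩ := hsuper 0 le_rfl
  have hAle : ∀ x ∈ M, ∀ p, -A ≤ h x p := by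
    intro x hx p
    have := hA x hx p
    simpa using this
  -- the defining sets
  set S : ℝ → Set ℝ := fun a => {r : ℝ | ∃ u : E → ℝ, ContDiff ℝ (⊤ : ℕ∞) u ∧
      r = sSup ((fun x => a * lam x + h x (fderiv ℝ u x)) '' M)} with hSdef
  set T : Set ℝ := {r : ℝ | ∃ u : E → ℝ, ContDiff ℝ (⊤ : ℕ∞) u ∧
      r = sSup ((fun x => h x (fderiv ℝ u x)) '' Z)} with hTdef
  have hSne : ∀ a, (S a).Nonempty := fun a =>
    ⟨_, (fun _ => (0:ℝ)), contDiff_const, rfl⟩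
  have hTne : T.Nonempty := ⟨_, (fun _ => (0:ℝ)), contDiff_const, rfl⟩
  -- boundedness above of images
  have hbddM : ∀ (a : ℝ) (u : E → ℝ), ContDiff ℝ (⊤ : ℕ∞) u →
      BddAbove ((fun x => a * lam x + h x (fderiv ℝ u x)) '' M) := fun a u hu =>
    (hMcpt.image (hFc a u hu)).bddAbove
  have hbddZ : ∀ (u : E → ℝ), ContDiff ℝ (⊤ : ℕ∞) u →
      BddAbove ((fun x => h x (fderiv ℝ u x)) '' Z) := fun u hu =>
    (hZcpt.image (hgc u hu)).bddAbove
  -- lower bounds for the defining sets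
  have hSlb : ∀ a, ∀ r ∈ S a, -A ≤ r := by
    rintro a r ⟨u, hu, rfl⟩
    have hmem : (fun x => a * lam x + h x (fderiv ℝ u x)) x0 ∈
        (fun x => a * lam x + h x (fderiv ℝ u x)) '' M := ⟨x0, hx0M, rfl⟩
    have hle := le_csSup (hbddM a u hu) hmem
    dsimp only at hle
    have : -A ≤ a * lam x0 + h x0 (fderiv ℝ u x0) := by
      rw [hx0lam]
      simpa using hAle x0 hx0M (fderiv ℝ u x0)
    linarith
  have hTlb : ∀ r ∈ T, -A ≤ r := by
    rintro r ⟨u, hu, rfl⟩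
    have hmem : (fun x => h x (fderiv ℝ u x)) x0 ∈
        (fun x => h x (fderiv ℝ u x)) '' Z := ⟨x0, hx0Z, rfl⟩
    have hle := le_csSup (hbddZ u hu) hmem
    dsimp only at hle
    have := hAle x0 hx0M (fderiv ℝ u x0)
    linarith
  have hSbdd : ∀ a, BddBelow (S a) := fun a => ⟨-A, hSlb a⟩
  have hTbdd : BddBelow T := ⟨-A, hTlb⟩
  -- monotonicity
  have hmono : Monotone cM := by
    intro a b hab
    rw [hcM a, hcM b]
    refine le_csInf (hSne b) ?_
    rintro r ⟨u, hu, rfl⟩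
    have hr' : sSup ((fun x => a * lam x + h x (fderiv ℝ u x)) '' M) ∈ S a :=
      ⟨u, hu, rfl⟩
    refine le_trans (csInf_le (hSbdd a) hr') ?_
    refine csSup_le (hMne.image _) ?_
    rintro y ⟨x, hxM, rfl⟩
    have h1 : a * lam x + h x (fderiv ℝ u x) ≤ b * lam x + h x (fderiv ℝ u x) := by
      have := mul_le_mul_of_nonneg_right hab (hlamnn x hxM)
      linarith
    exact h1.trans (le_csSup (hbddM b u hu) ⟨x, hxM, rfl⟩)
  -- clam ≤ cM a
  have hlower : ∀ a : ℝ, clam ≤ cM a := by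
    intro a
    rw [hcM a, hclam]
    refine le_csInf (hSne a) ?_
    rintro r ⟨u, hu, rfl⟩
    have hr' : sSup ((fun x => h x (fderiv ℝ u x)) '' Z) ∈ T := ⟨u, hu, rfl⟩
    refine le_trans (csInf_le hTbdd hr') ?_
    refine csSup_le ⟨_, ⟨x0, hx0Z, rfl⟩⟩ ?_
    rintro y ⟨x, hxZ, rfl⟩
    have hx : (fun x => a * lam x + h x (fderiv ℝ u x)) x ∈
        (fun x => a * lam x + h x (fderiv ℝ u x)) '' M := ⟨x, hZsub hxZ, rfl⟩
    have := le_csSup (hbddM a u hu) hx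
    have hz : lam x = 0 := hxZ.2
    simp only [hz, mul_zero, zero_add] at this
    exact this
  refine ⟨hmono, hlower, ?_⟩
  -- the limit
  rw [tendsto_order]
  constructor
  · intro b hb
    filter_upwards with a
    exact lt_of_lt_of_le hb (hlower a)
  · intro b hb
    -- find a₀ with cM a₀ < b, then use monotonicity
    set s : ℝ := (clam + b) / 2 with hsdef
    have hclams : clam < s := by rw [hsdef]; linarith
    have hsb : s < b := by rw [hsdef]; linarith
    obtain ⟨r, hrT, hrs⟩ : ∃ r ∈ T, r < s := by
      apply exists_lt_of_csInf_lt hTne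
      rw [← hclam]; exact hclams
    obtain ⟨u, hu, rfl⟩ := hrT
    set g : E → ℝ := fun x => h x (fderiv ℝ u x) with hgdef
    have hgcont : Continuous g := hgc u hu
    -- on Z, g < s
    have hgZ : ∀ x ∈ Z, g x < s := fun x hx =>
      lt_of_le_of_lt (le_csSup (hbddZ u hu) ⟨x, hx, rfl⟩) hrs
    set U : Set E := {x | g x < s} with hUdef
    have hUopen : IsOpen U := isOpen_lt hgcont continuous_const
    set K : Set E := M \ U with hKdef
    have hKcpt : IsCompact K := hMcpt.diff hUopen
    have claim : ∃ a₀ : ℝ, ∀ x ∈ M, a₀ * lam x + g x ≤ s := by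
      rcases K.eq_empty_or_nonempty with hKe | hKne
      · refine ⟨0, fun x hxM => ?_⟩
        have hxU : x ∈ U := by
          by_contra hxU
          have hxK : x ∈ K := ⟨hxM, hxU⟩
          rw [hKe] at hxK
          simpa using hxK
        have : g x < s := hxU
        linarith
      · -- min of lam on K is positive
        obtain ⟨z, hzK, hzmin⟩ := hKcpt.exists_isMinOn hKne hlamc.continuousOn
        have hzpos : 0 < lam z := by
          rcases lt_or_eq_of_le (hlamnn z hzK.1) with hp | hp
          · exact hp
          · exfalso
            have hzZ : z ∈ Z := ⟨hzK.1, hp.symm⟩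
            exact hzK.2 (hgZ z hzZ)
        have hgK : BddAbove (g '' K) := (hKcpt.image hgcont).bddAbove
        set C : ℝ := sSup (g '' K) with hCdef
        refine ⟨min 0 ((s - C) / lam z), fun x hxM => ?_⟩
        by_cases hxU : x ∈ U
        · have h1 : g x < s := hxU
          have h2 : min 0 ((s - C) / lam z) * lam x ≤ 0 :=
            mul_nonpos_of_nonpos_of_nonneg (min_le_left _ _) (hlamnn x hxM)
          linarith
        · have hxK : x ∈ K := ⟨hxM, hxU⟩
          have hgxC : g x ≤ C := le_csSup hgK ⟨x, hxK, rfl⟩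
          have hlamx : lam z ≤ lam x := hzmin hxK
          have h1 : min 0 ((s - C) / lam z) * lam x ≤
              min 0 ((s - C) / lam z) * lam z :=
            mul_le_mul_of_nonpos_left hlamx (min_le_left _ _)
          have h2 : min 0 ((s - C) / lam z) * lam z ≤ ((s - C) / lam z) * lam z :=
            mul_le_mul_of_nonneg_right (min_le_right _ _) hzpos.le
          have h3 : ((s - C) / lam z) * lam z = s - C :=
            div_mul_cancel₀ _ hzpos.ne'
          linarith
    obtain ⟨a₀, ha₀⟩ := claim
    rw [eventually_atBot]
    refine ⟨a₀, fun a ha => ?_⟩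
    have hcMa₀ : cM a₀ ≤ s := by
      rw [hcM a₀]
      have hmem : sSup ((fun x => a₀ * lam x + h x (fderiv ℝ u x)) '' M) ∈ S a₀ :=
        ⟨u, hu, rfl⟩
      refine le_trans (csInf_le (hSbdd a₀) hmem) ?_
      refine csSup_le (hMne.image _) ?_
      rintro y ⟨x, hxM, rfl⟩
      exact ha₀ x hxM
    exact lt_of_le_of_lt (le_trans (hmono ha) hcMa₀) hsb
end

section
/- On M = S¹ ≅ ℝ/2πℤ, let h(x,p) = ½p² + 1 − cos x and λ(x) = (1−cos x)². Then for every a ∈ ℝ, max_{x∈S¹} [(1−cos x) + a(1−cos x)²] > 0; in particular c(h+aλ) := inf_{u∈C^∞(S¹)} sup_x [aλ(x) + h(x,u'(x))] satisfies c(h+aλ) > 0 = c_λ(h), where c_λ(h) := inf_u sup_{x∈λ⁻¹(0)} h(x,u'(x)). -/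
open Real Set

private lemma periodic_deriv' {u : ℝ → ℝ} {c : ℝ} (h : Function.Periodic u c) :
    Function.Periodic (deriv u) c := by
  intro x
  have h1 : (fun y => u (y + c)) = u := funext fun y => h y
  calc deriv u (x + c) = deriv (fun y => u (y + c)) x := (deriv_comp_add_const u c x).symm
    _ = deriv u x := by rw [h1]

private lemma witness (a : ℝ) : ∃ x : ℝ,
    0 < (1 - Real.cos x) + a * (1 - Real.cos x)^2 := by
  set t : ℝ := min 2 (1 / (1 + |a|)) with ht
  have hpos : 0 < t := lt_min (by norm_num) (by positivity)
  have ht2 : t ≤ 2 := min_le_left _ _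
  have hta : t ≤ 1 / (1 + |a|) := min_le_right _ _
  refine ⟨Real.arccos (1 - t), ?_⟩
  have hc : Real.cos (Real.arccos (1 - t)) = 1 - t :=
    Real.cos_arccos (by linarith) (by linarith)
  rw [hc]
  have h1 : 1 - (1 - t) = t := by ring
  rw [h1]
  have key : 1 + a * t > 0 := by
    have : |a * t| ≤ |a| / (1 + |a|) := by
      rw [abs_mul, abs_of_pos hpos]
      calc |a| * t ≤ |a| * (1 / (1 + |a|)) := by
            apply mul_le_mul_of_nonneg_left hta (abs_nonneg a)
        _ = |a| / (1 + |a|) := by ring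
    have h2 : |a| / (1 + |a|) < 1 := by
      rw [div_lt_one (by positivity)]; linarith
    have := (abs_le.1 this).1
    nlinarith [abs_nonneg (a * t)]
  nlinarith

private lemma bdd1 (a : ℝ) : BddAbove (Set.range fun x : ℝ =>
    (1 - Real.cos x) + a * (1 - Real.cos x)^2) := by
  refine ⟨2 + |a| * 4, ?_⟩
  rintro r ⟨x, rfl⟩
  have h1 : 0 ≤ 1 - Real.cos x := by nlinarith [Real.cos_le_one x]
  have h2 : 1 - Real.cos x ≤ 2 := by nlinarith [Real.neg_one_le_cos x]
  have h3 : (1 - Real.cos x)^2 ≤ 4 := by nlinarith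
  have h4 : a * (1 - Real.cos x)^2 ≤ |a| * 4 := by
    calc a * (1 - Real.cos x)^2 ≤ |a| * (1 - Real.cos x)^2 :=
          mul_le_mul_of_nonneg_right (le_abs_self a) (sq_nonneg _)
      _ ≤ |a| * 4 := mul_le_mul_of_nonneg_left h3 (abs_nonneg a)
  simp only []
  linarith

/-- on the circle, with `h(x,p)=½p²+1−cos x` and
`λ(x)=(1−cos x)²`, one has `max_x[(1−cos x)+a(1−cos x)²] > 0` for every `a`,
`c_λ(h) = 0`, and `c(h+aλ) > c_λ(h)` for every `a`. -/
theorem stmt13 :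
    (∀ a : ℝ, 0 < sSup (Set.range fun x : ℝ =>
        (1 - Real.cos x) + a * (1 - Real.cos x)^2)) ∧
    sInf {r : ℝ | ∃ u : ℝ → ℝ, ContDiff ℝ (⊤ : ℕ∞) u ∧
        Function.Periodic u (2 * Real.pi) ∧
        r = sSup ((fun x => (1/2) * (deriv u x)^2 + (1 - Real.cos x)) ''
          {x : ℝ | Real.cos x = 1})} = 0 ∧
    ∀ a : ℝ, 0 < sInf {r : ℝ | ∃ u : ℝ → ℝ, ContDiff ℝ (⊤ : ℕ∞) u ∧
        Function.Periodic u (2 * Real.pi) ∧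
        r = sSup (Set.range fun x : ℝ =>
          a * (1 - Real.cos x)^2 + ((1/2) * (deriv u x)^2 + (1 - Real.cos x)))} := by
  have pi_pos := Real.pi_pos
  -- key fact: for smooth periodic u, the image over {cos x = 1} is a singleton
  have image_eq : ∀ u : ℝ → ℝ, Function.Periodic u (2 * Real.pi) →
      (fun x => (1/2) * (deriv u x)^2 + (1 - Real.cos x)) '' {x : ℝ | Real.cos x = 1}
        = {(1/2) * (deriv u 0)^2} := by
    intro u hper
    have hd := periodic_deriv' hper
    apply Set.eq_singleton_iff_nonempty_unique_mem.2
    constructor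
    · exact ⟨(1/2) * (deriv u 0)^2, ⟨0, by simp [Real.cos_zero], by simp [Real.cos_zero]⟩⟩
    · rintro r ⟨x, hx, rfl⟩
      obtain ⟨n, hn⟩ := (Real.cos_eq_one_iff x).1 hx
      have : deriv u x = deriv u 0 := by rw [← hn, hd.int_mul_eq n]
      simp only [Set.mem_setOf_eq] at hx
      simp only [this, hx]; ring
  refine ⟨?_, ?_, ?_⟩
  · -- Part 1
    intro a
    obtain ⟨x, hx⟩ := witness a
    calc (0:ℝ) < (1 - Real.cos x) + a * (1 - Real.cos x)^2 := hx
      _ ≤ _ := le_csSup (bdd1 a) ⟨x, rfl⟩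
  · -- Part 2
    apply le_antisymm
    · apply csInf_le
      · refine ⟨0, ?_⟩
        rintro r ⟨u, hu, hper, rfl⟩
        rw [image_eq u hper, csSup_singleton]
        positivity
      · refine ⟨fun _ => 0, contDiff_const, fun _ => rfl, ?_⟩
        rw [image_eq (fun _ => 0) (fun _ => rfl), csSup_singleton]
        simp
    · apply le_csInf
      · exact ⟨_, fun _ => 0, contDiff_const, fun _ => rfl, rfl⟩
      · rintro r ⟨u, hu, hper, rfl⟩
        rw [image_eq u hper, csSup_singleton]
        positivity
  · -- Part 3
    intro a
    obtain ⟨x₀, hx₀⟩ := witness a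
    have key : ∀ r ∈ {r : ℝ | ∃ u : ℝ → ℝ, ContDiff ℝ (⊤ : ℕ∞) u ∧
        Function.Periodic u (2 * Real.pi) ∧
        r = sSup (Set.range fun x : ℝ =>
          a * (1 - Real.cos x)^2 + ((1/2) * (deriv u x)^2 + (1 - Real.cos x)))},
        (1 - Real.cos x₀) + a * (1 - Real.cos x₀)^2 ≤ r := by
      rintro r ⟨u, hu, hper, rfl⟩
      set g : ℝ → ℝ := fun x =>
        a * (1 - Real.cos x)^2 + ((1/2) * (deriv u x)^2 + (1 - Real.cos x)) with hg
      have hgper : Function.Periodic g (2 * Real.pi) := by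
        intro x
        have h1 : Real.cos (x + 2 * Real.pi) = Real.cos x := Real.cos_add_two_pi x
        have h2 := periodic_deriv' hper x
        simp only [hg, h1, h2]
      have hgcont : Continuous g := by
        have hdc : Continuous (deriv u) := hu.continuous_deriv (by simp)
        fun_prop
      have hbdd : BddAbove (Set.range g) := by
        rw [← hgper.image_uIcc (by positivity) 0]
        exact ((isCompact_uIcc.image hgcont)).bddAbove
      calc (1 - Real.cos x₀) + a * (1 - Real.cos x₀)^2
          ≤ g x₀ := by simp only [hg]; nlinarith [sq_nonneg (deriv u x₀)]
        _ ≤ sSup (Set.range g) := le_csSup hbdd (Set.mem_range_self x₀)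
    have hne : ∃ r : ℝ, ∃ u : ℝ → ℝ, ContDiff ℝ (⊤ : ℕ∞) u ∧
        Function.Periodic u (2 * Real.pi) ∧
        r = sSup (Set.range fun x : ℝ =>
          a * (1 - Real.cos x)^2 + ((1/2) * (deriv u x)^2 + (1 - Real.cos x))) :=
      ⟨_, fun _ => 0, contDiff_const, fun _ => rfl, rfl⟩
    exact lt_of_lt_of_le hx₀ (le_csInf hne key)
end
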